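/- For every integer n ≥ 2 and every function f from the primes to the real numbers, Σ_{d | n, d > 1} μ(d)(ω(d) − 1) f(p(d)) equals f(P₂(n)) if n has at least two distinct prime factors, and equals 0 if n has exactly one distinct prime factor; here the sum runs over all divisors d > 1 of n. -/

import Mathlib

open Finset ArithmeticFunction

/-- The second largest distinct prime factor of `n`: the largest prime factor of `n`
strictly less than `P(n)`, defined when `ω(n) ≥ 2`; junk value `1` otherwise. -/
def secondLargestPrimeFac (n : ℕ) : ℕ :=
  ((n.primeFactors.sort (· ≤ ·)).reverse).getD 1 1

/-!
Squarefree divisors `d > 1` of `n` correspond to nonempty sets `T` of primes dividing `n`, with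
`μ(d) = (-1)^|T|`, `ω(d) = |T|` and `p(d) = min T`. Adding the primes of `n` one at a time from
the largest down, the sets whose minimum is the newly added prime `a` contribute
`f(a) · Σ_{U ⊆ A} (-1)^(|U|+1) |U|`, where `A` is the set of primes above `a`; this alternating
sum is `1` if `|A| = 1` (so `a = P₂(n)`) and `0` otherwise.
-/

namespace Finset

variable {α R : Type*} [CommRing R]

theorem sum_powerset_neg_one_pow_card_mul_card [DecidableEq α] (s : Finset α) :
    ∑ t ∈ s.powerset, (-1 : R) ^ #t * #t = if #s = 1 then -1 else 0 := by
  induction s using Finset.induction_on with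
  | empty => simp
  | insert a s ha ih =>
    have h_insert : ∑ t ∈ s.powerset, (-1 : R) ^ #(insert a t) * #(insert a t)
        = -∑ t ∈ s.powerset, (-1 : R) ^ #t * #t - ∑ t ∈ s.powerset, (-1 : R) ^ #t := by
      rw [← sum_neg_distrib, ← sum_sub_distrib]
      refine sum_congr rfl fun t ht => ?_
      rw [card_insert_of_notMem fun hat => ha (mem_powerset.mp ht hat)]
      push_cast
      ring
    have h_alt : ∑ t ∈ s.powerset, (-1 : R) ^ #t = if s = ∅ then 1 else 0 := by
      have := congrArg (Int.cast : ℤ → R) (sum_powerset_neg_one_pow_card (x := s))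
      push_cast at this
      simpa [apply_ite (Int.cast : ℤ → R)] using this
    rw [sum_powerset_insert ha, h_insert, h_alt, card_insert_of_notMem ha]
    simp only [Nat.add_eq_right, card_eq_zero]
    split_ifs <;> ring

variable [LinearOrder α]

theorem getD_one_reverse_sort_insert_of_forall_lt {a : α} {s : Finset α} (d : α)
    (ha : ∀ b ∈ s, a < b) :
    ((insert a s).sort (· ≤ ·)).reverse.getD 1 d
      = if #s = 1 then a else (s.sort (· ≤ ·)).reverse.getD 1 d := by
  have hsort : (insert a s).sort (· ≤ ·) = a :: s.sort (· ≤ ·) :=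
    sort_insert _ (fun b hb => (ha b hb).le) fun has => lt_irrefl a (ha a has)
  rw [hsort, List.reverse_cons]
  obtain h | h | h : #s = 0 ∨ #s = 1 ∨ 2 ≤ #s := by omega
  · simp [card_eq_zero.mp h]
  · obtain ⟨b, rfl⟩ := card_eq_one.mp h
    simp
  · rw [List.getD_append _ _ _ _ (by simp; omega), if_neg (by omega)]

theorem min_insert_of_forall_lt {a : α} {s : Finset α} (ha : ∀ b ∈ s, a < b) :
    (insert a s).min = a := by
  rw [min_insert, min_eq_left (Finset.le_min fun b hb => WithTop.coe_le_coe.mpr (ha b hb).le)]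

-- The default `d` plays the role of both `Nat.minFac 1 = 1` (the minimum of `∅`) and the junk
-- value of `secondLargestPrimeFac` on numbers with fewer than two prime factors.
theorem sum_powerset_neg_one_pow_card_mul_card_sub_one_mul (s : Finset α) (d : α) (f : α → R) :
    ∑ t ∈ s.powerset, (-1 : R) ^ #t * (#t - 1) * f (t.min.untopD d)
      = (if 2 ≤ #s then f ((s.sort (· ≤ ·)).reverse.getD 1 d) else 0) - f d := by
  induction s using Finset.induction_on_min with
  | empty => simp
  | insert a s ha ih =>
    have has : a ∉ s := fun has => lt_irrefl a (ha a has)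
    have h_insert : ∑ t ∈ s.powerset, (-1 : R) ^ #(insert a t) * (#(insert a t) - 1)
          * f ((insert a t).min.untopD d)
        = -(∑ t ∈ s.powerset, (-1 : R) ^ #t * #t) * f a := by
      rw [neg_mul, sum_mul, ← sum_neg_distrib]
      refine sum_congr rfl fun t ht => ?_
      have hts := mem_powerset.mp ht
      rw [card_insert_of_notMem fun hat => has (hts hat),
        min_insert_of_forall_lt fun b hb => ha b (hts hb), WithTop.untopD_coe]
      push_cast
      ring
    rw [sum_powerset_insert has, ih, h_insert, sum_powerset_neg_one_pow_card_mul_card,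
      getD_one_reverse_sort_insert_of_forall_lt d ha, card_insert_of_notMem has]
    obtain h | h | h : #s = 0 ∨ #s = 1 ∨ 2 ≤ #s := by omega
    · simp [h]
    · simp [h, sub_eq_neg_add]
    · simp [h, show #s ≠ 1 by omega, show 2 ≤ #s + 1 by omega]

end Finset

theorem Nat.filter_one_lt_divisors (n : ℕ) : n.divisors.filter (1 < ·) = n.divisors.erase 1 := by
  ext d
  simp only [mem_filter, mem_erase, Nat.one_lt_iff_ne_zero_and_ne_one]
  exact ⟨fun ⟨hd, _, hd1⟩ => ⟨hd1, hd⟩,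
    fun ⟨hd1, hd⟩ => ⟨hd, (Nat.pos_of_mem_divisors hd).ne', hd1⟩⟩

theorem Nat.minFac_prod_of_forall_prime {s : Finset ℕ} (hs : ∀ p ∈ s, p.Prime) :
    (∏ p ∈ s, p).minFac = s.min.untopD 1 := by
  rcases s.eq_empty_or_nonempty with rfl | hne
  · simp
  rw [← coe_min' hne, WithTop.untopD_coe]
  have hmin := min'_mem s hne
  apply le_antisymm (Nat.minFac_le_of_dvd (hs _ hmin).two_le (dvd_prod_of_mem (fun p => p) hmin))
  apply min'_le
  have hprod_ne_one : ∏ p ∈ s, p ≠ 1 := fun h =>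
    (hs _ hmin).one_lt.ne' (Nat.dvd_one.mp (h ▸ dvd_prod_of_mem _ hmin))
  have hmem : (∏ p ∈ s, p).minFac ∈ (∏ p ∈ s, p).primeFactors :=
    Nat.mem_primeFactors.mpr ⟨Nat.minFac_prime hprod_ne_one, Nat.minFac_dvd _,
      prod_ne_zero_iff.mpr fun p hp => (hs p hp).ne_zero⟩
  rwa [Nat.primeFactors_prod hs] at hmem

namespace ArithmeticFunction

theorem moebius_prod_of_forall_prime {s : Finset ℕ} (hs : ∀ p ∈ s, p.Prime) :
    moebius (∏ p ∈ s, p) = (-1) ^ #s := by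
  rw [isMultiplicative_moebius.map_prod_of_prime s hs,
    prod_congr rfl fun p hp => moebius_apply_prime (hs p hp), prod_const]

theorem sum_divisors_moebius_mul {R : Type*} [CommRing R] {n : ℕ} (hn : n ≠ 0) (g : ℕ → R) :
    ∑ d ∈ n.divisors, (moebius d : R) * g d
      = ∑ s ∈ n.primeFactors.powerset, (-1) ^ #s * g (∏ p ∈ s, p) := by
  rw [← sum_filter_of_ne (p := Squarefree) fun d _ hd => moebius_ne_zero_iff_squarefree.mp
      fun h => hd (by simp [h]), Nat.sum_divisors_filter_squarefree hn, Nat.factors_eq]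
  refine sum_congr (by simp) fun s hs => ?_
  have hprime : ∀ p ∈ s, p.Prime := fun p hp =>
    Nat.prime_of_mem_primeFactors (mem_powerset.mp hs hp)
  rw [prod_val, Function.id_def, moebius_prod_of_forall_prime hprime]
  push_cast
  rfl

end ArithmeticFunction

/-- Second-order duality: for `n ≥ 2` and any real-valued function `f` on the primes,
`Σ_{d ∣ n, d > 1} μ(d)(ω(d) − 1) f(p(d))` equals `f(P₂(n))` if `ω(n) ≥ 2`, and `0`
if `n` has exactly one distinct prime factor. -/
theorem duality_second_largest (n : ℕ) (hn : 2 ≤ n) (f : ℕ → ℝ) :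
    ∑ d ∈ n.divisors.filter (fun d => 1 < d),
        (moebius d : ℝ) * ((d.primeFactors.card : ℝ) - 1) * f d.minFac
      = if 2 ≤ n.primeFactors.card then f (secondLargestPrimeFac n) else 0 := by
  have hn0 : n ≠ 0 := by omega
  have hterm : ∀ s ∈ n.primeFactors.powerset,
      (-1 : ℝ) ^ #s * ((#(∏ p ∈ s, p).primeFactors : ℝ) - 1) * f (∏ p ∈ s, p).minFac
        = (-1) ^ #s * (#s - 1) * f (s.min.untopD 1) := by
    intro s hs
    have hprime : ∀ p ∈ s, p.Prime := fun p hp =>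
      Nat.prime_of_mem_primeFactors (mem_powerset.mp hs hp)
    rw [Nat.primeFactors_prod hprime, Nat.minFac_prod_of_forall_prime hprime]
  simp_rw [Nat.filter_one_lt_divisors, sum_erase_eq_sub (Nat.one_mem_divisors.mpr hn0), mul_assoc,
    sum_divisors_moebius_mul hn0, ← mul_assoc]
  rw [sum_congr rfl hterm, sum_powerset_neg_one_pow_card_mul_card_sub_one_mul]
  simp [secondLargestPrimeFac]
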